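/- For ε > 0, define Φ(ε) := 1 − (√(1+ε) + F(ε)/√(1+ε))·artanh(1/√(1+ε)) where F(ε) := −(1+ε)[1 − 2 ln((2+ε)/(2−ε))/ln((2+ε)²/ε)]² and 0 < ε < 2. Then Φ(ε) ≥ 1 − 2√(1+ε)·ln((2+ε)/(2−ε)), and consequently liminf_{ε→0⁺} Φ(ε) ≥ 1; in fact lim_{ε→0⁺} Φ(ε) = 1. -/

import Mathlib

/-!
Write `s = √(1+ε)`, `A = artanh (1/s)` and `δ` for the ratio
`2 ln((2+ε)/(2-ε)) / ln((2+ε)²/ε)` inside `F`. Since `s² = 1+ε`, the factor in front of `A`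
is `s + F/s = s (2δ - δ²)`, so `Φ = 1 - s (2δ - δ²) A`. On the other hand
`A = ½ ln((s+1)²/(s²-1)) ≤ ½ ln((2+ε)²/ε)`, which is exactly `δ A ≤ ln((2+ε)/(2-ε))`.
Dropping `-δ²` gives the lower bound; as `0 ≤ δ ≤ 2` for small `ε`, also `Φ ≤ 1`, and the
limit follows by squeezing, the lower bound tending to `1 - 2 ln 1 = 1`.
-/

open Real Set Filter

/-- The inverse hyperbolic tangent. -/
noncomputable def artanh (x : ℝ) : ℝ := (1/2) * Real.log ((1 + x) / (1 - x))

/-- F(ε) := −(1+ε)[1 − 2 ln((2+ε)/(2−ε))/ln((2+ε)²/ε)]². -/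
noncomputable def Ffun (ε : ℝ) : ℝ :=
  -(1 + ε) * (1 - 2 * Real.log ((2 + ε) / (2 - ε)) / Real.log ((2 + ε)^2 / ε))^2

/-- Φ(ε) := 1 − (√(1+ε) + F(ε)/√(1+ε))·artanh(1/√(1+ε)). -/
noncomputable def Phi (ε : ℝ) : ℝ :=
  1 - (Real.sqrt (1 + ε) + Ffun ε / Real.sqrt (1 + ε)) *
    _root_.artanh (1 / Real.sqrt (1 + ε))

open Topology

lemma artanh_eq_real_artanh {x : ℝ} (hx : x ∈ Icc (-1) 1) : _root_.artanh x = Real.artanh x :=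
  (Real.artanh_eq_half_log hx).symm

lemma artanh_nonneg {x : ℝ} (h0 : 0 ≤ x) (h1 : x ≤ 1) : 0 ≤ _root_.artanh x := by
  rw [artanh_eq_real_artanh ⟨by linarith, h1⟩]
  exact Real.artanh_nonneg h0

lemma artanh_one_div {s : ℝ} (hs : 1 < s) :
    _root_.artanh (1 / s) = Real.log ((s + 1) ^ 2 / (s ^ 2 - 1)) / 2 := by
  have hs1 : s - 1 ≠ 0 := sub_ne_zero.2 hs.ne'
  have hs2 : s ^ 2 - 1 ≠ 0 := by nlinarith
  have harg : (1 + 1 / s) / (1 - 1 / s) = (s + 1) ^ 2 / (s ^ 2 - 1) := by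
    field_simp
    ring
  rw [_root_.artanh, harg]
  ring

lemma artanh_one_div_sqrt_le {ε : ℝ} (hε : 0 < ε) :
    _root_.artanh (1 / √(1 + ε)) ≤ Real.log ((2 + ε) ^ 2 / ε) / 2 := by
  have hs : 1 < √(1 + ε) := (Real.lt_sqrt zero_le_one).2 (by linarith)
  have hsq : √(1 + ε) ^ 2 = 1 + ε := Real.sq_sqrt (by linarith)
  have hs_le : √(1 + ε) ≤ 1 + ε := by nlinarith
  rw [artanh_one_div hs, hsq, add_sub_cancel_left]
  gcongr Real.log (?_ ^ 2 / _) / _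
  linarith

lemma artanh_one_div_sqrt_nonneg {ε : ℝ} (hε : 0 ≤ ε) : 0 ≤ _root_.artanh (1 / √(1 + ε)) :=
  artanh_nonneg (by positivity)
    (div_le_one_of_le₀ (Real.le_sqrt_of_sq_le (by linarith)) (Real.sqrt_nonneg _))

noncomputable def deltaFun (ε : ℝ) : ℝ :=
  2 * Real.log ((2 + ε) / (2 - ε)) / Real.log ((2 + ε) ^ 2 / ε)

lemma log_two_add_div_two_sub_nonneg {ε : ℝ} (h0 : 0 ≤ ε) (h2 : ε < 2) :
    0 ≤ Real.log ((2 + ε) / (2 - ε)) :=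
  Real.log_nonneg <| (one_le_div (by linarith)).2 (by linarith)

lemma log_two_add_sq_div_pos {ε : ℝ} (hε : 0 < ε) : 0 < Real.log ((2 + ε) ^ 2 / ε) :=
  Real.log_pos <| (one_lt_div hε).2 (by nlinarith)

lemma deltaFun_nonneg {ε : ℝ} (h0 : 0 < ε) (h2 : ε < 2) : 0 ≤ deltaFun ε :=
  div_nonneg (mul_nonneg zero_le_two (log_two_add_div_two_sub_nonneg h0.le h2))
    (log_two_add_sq_div_pos h0).le

lemma deltaFun_le_two {ε : ℝ} (h0 : 0 < ε) (h1 : ε ≤ 1) : deltaFun ε ≤ 2 := by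
  have hlog : Real.log ((2 + ε) / (2 - ε)) ≤ Real.log ((2 + ε) ^ 2 / ε) := by
    refine Real.log_le_log (div_pos (by linarith) (by linarith)) ?_
    rw [div_le_div_iff₀ (by linarith) h0]
    nlinarith
  rw [deltaFun, div_le_iff₀ (log_two_add_sq_div_pos h0)]
  linarith

lemma deltaFun_mul_artanh_le {ε : ℝ} (h0 : 0 < ε) (h2 : ε < 2) :
    deltaFun ε * _root_.artanh (1 / √(1 + ε)) ≤ Real.log ((2 + ε) / (2 - ε)) :=
  calc deltaFun ε * _root_.artanh (1 / √(1 + ε))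
      ≤ deltaFun ε * (Real.log ((2 + ε) ^ 2 / ε) / 2) :=
        mul_le_mul_of_nonneg_left (artanh_one_div_sqrt_le h0) (deltaFun_nonneg h0 h2)
    _ = Real.log ((2 + ε) / (2 - ε)) := by
        have := (log_two_add_sq_div_pos h0).ne'
        rw [deltaFun]
        field_simp

lemma Phi_eq {ε : ℝ} (hε : 0 < 1 + ε) :
    Phi ε = 1 - √(1 + ε) * (2 * deltaFun ε - deltaFun ε ^ 2) * _root_.artanh (1 / √(1 + ε)) := by
  have hs : √(1 + ε) ≠ 0 := (Real.sqrt_pos.2 hε).ne'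
  have hsq : √(1 + ε) ^ 2 = 1 + ε := Real.sq_sqrt hε.le
  have hfactor : √(1 + ε) + Ffun ε / √(1 + ε) = √(1 + ε) * (2 * deltaFun ε - deltaFun ε ^ 2) := by
    rw [Ffun, ← deltaFun]
    field_simp
    linear_combination (1 - deltaFun ε) ^ 2 * hsq
  rw [Phi, hfactor]

lemma le_Phi {ε : ℝ} (h0 : 0 < ε) (h2 : ε < 2) :
    1 - 2 * √(1 + ε) * Real.log ((2 + ε) / (2 - ε)) ≤ Phi ε := by
  have hA := artanh_one_div_sqrt_nonneg h0.le
  have hdA := deltaFun_mul_artanh_le h0 h2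
  set δ := deltaFun ε
  have hbound : √(1 + ε) * (2 * δ - δ ^ 2) * _root_.artanh (1 / √(1 + ε))
      ≤ 2 * √(1 + ε) * Real.log ((2 + ε) / (2 - ε)) :=
    calc √(1 + ε) * (2 * δ - δ ^ 2) * _root_.artanh (1 / √(1 + ε))
        ≤ √(1 + ε) * (2 * δ) * _root_.artanh (1 / √(1 + ε)) := by
          gcongr
          exact sub_le_self _ (sq_nonneg δ)
      _ = 2 * √(1 + ε) * (δ * _root_.artanh (1 / √(1 + ε))) := by ring
      _ ≤ 2 * √(1 + ε) * Real.log ((2 + ε) / (2 - ε)) := by gcongr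
  rw [Phi_eq (by linarith)]
  linarith

lemma Phi_le_one {ε : ℝ} (h0 : 0 < ε) (h1 : ε ≤ 1) : Phi ε ≤ 1 := by
  have hA := artanh_one_div_sqrt_nonneg h0.le
  have hδ0 := deltaFun_nonneg h0 (by linarith)
  have hδ2 := deltaFun_le_two h0 h1
  have hδ : 0 ≤ 2 * deltaFun ε - deltaFun ε ^ 2 := by nlinarith
  rw [Phi_eq (by linarith), sub_le_self_iff]
  positivity

lemma tendsto_one_sub_two_mul_sqrt_mul_log :
    Tendsto (fun ε : ℝ ↦ 1 - 2 * √(1 + ε) * Real.log ((2 + ε) / (2 - ε))) (𝓝[>] 0) (𝓝 1) := by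
  have hcont : ContinuousAt (fun ε : ℝ ↦ 1 - 2 * √(1 + ε) * Real.log ((2 + ε) / (2 - ε))) 0 := by
    have hquot : ContinuousAt (fun ε : ℝ ↦ (2 + ε) / (2 - ε)) 0 :=
      (continuousAt_const.add continuousAt_id).div (continuousAt_const.sub continuousAt_id)
        (by norm_num)
    exact continuousAt_const.sub ((continuousAt_const.mul (by fun_prop)).mul
      (hquot.log (by norm_num)))
  simpa using hcont.tendsto.mono_left nhdsWithin_le_nhds

lemma tendsto_Phi : Tendsto Phi (𝓝[>] 0) (𝓝 1) := by
  have hsmall : Ioc (0 : ℝ) 1 ∈ 𝓝[>] 0 := Ioc_mem_nhdsGT one_pos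
  refine tendsto_of_tendsto_of_tendsto_of_le_of_le' tendsto_one_sub_two_mul_sqrt_mul_log
    tendsto_const_nhds ?_ ?_
  · filter_upwards [hsmall] with ε hε using le_Phi hε.1 (by linarith [hε.2])
  · filter_upwards [hsmall] with ε hε using Phi_le_one hε.1 hε.2

/-- For 0 < ε < 2, Φ(ε) ≥ 1 − 2√(1+ε)·ln((2+ε)/(2−ε)); consequently
liminf_{ε→0⁺} Φ(ε) ≥ 1, and in fact lim_{ε→0⁺} Φ(ε) = 1. -/
theorem stmt_14 :
    (∀ ε : ℝ, 0 < ε → ε < 2 →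
      Phi ε ≥ 1 - 2 * Real.sqrt (1 + ε) * Real.log ((2 + ε) / (2 - ε))) ∧
    (1 : ℝ) ≤ Filter.liminf Phi (nhdsWithin 0 (Ioi 0)) ∧
    Filter.Tendsto Phi (nhdsWithin 0 (Ioi 0)) (nhds 1) :=
  ⟨fun _ h0 h2 ↦ le_Phi h0 h2, tendsto_Phi.liminf_eq.ge, tendsto_Phi⟩
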